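/- arXiv:hep-th/0501104 — 4 statements merged into one kernel-verified Lean document; each statement's English description precedes it below -/
import Mathlib

section
/- Let H be a complex Hilbert space, D ⊆ H a dense complex-linear subspace, and S : D → H an additive, conjugate-linear map (S(cψ) = conj(c)·Sψ) with S(Sψ) = ψ for all ψ ∈ D (so S maps D onto D) and with closed graph (ψₙ ∈ D, ψₙ → ψ, Sψₙ → φ imply ψ ∈ D and Sψ = φ). Then K := {ψ ∈ D : Sψ = ψ} is a closed ℝ-linear subspace of H satisfying K ∩ iK = {0} and K + iK = D (hence K is a standard real subspace), and S(k + ik′) = k − ik′ for all k, k′ ∈ K. -/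
open scoped Pointwise
open Filter

/-- Let `D ⊆ H` be a dense complex subspace of a complex Hilbert
space `H` and let `S` be an additive, conjugate-linear involution of `D` with closed
graph. Then `K := {ψ ∈ D : S ψ = ψ}` is a closed real subspace of `H` with
`K ∩ iK = {0}` and `K + iK = D` (hence `K` is a standard real subspace), and
`S (k + i k') = k - i k'` for all `k, k' ∈ K`. -/
theorem fixed_points_of_conjugate_linear_involution_standard
    {H : Type*} [NormedAddCommGroup H] [InnerProductSpace ℂ H] [CompleteSpace H]
    (D : Submodule ℂ H) (hD : Dense (D : Set H))
    (S : H → H)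
    (hmap : ∀ ψ ∈ D, S ψ ∈ D)
    (hadd : ∀ ψ ∈ D, ∀ φ ∈ D, S (ψ + φ) = S ψ + S φ)
    (hconj : ∀ (c : ℂ), ∀ ψ ∈ D, S (c • ψ) = (starRingEnd ℂ c) • S ψ)
    (hinv : ∀ ψ ∈ D, S (S ψ) = ψ)
    (hclosedGraph : ∀ (ψseq : ℕ → H) (ψ φ : H), (∀ n, ψseq n ∈ D) →
        Tendsto ψseq atTop (nhds ψ) → Tendsto (fun n => S (ψseq n)) atTop (nhds φ) →
        ψ ∈ D ∧ S ψ = φ) :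
    (0 : H) ∈ {ψ : H | ψ ∈ D ∧ S ψ = ψ} ∧
    (∀ x ∈ {ψ : H | ψ ∈ D ∧ S ψ = ψ}, ∀ y ∈ {ψ : H | ψ ∈ D ∧ S ψ = ψ},
        x + y ∈ {ψ : H | ψ ∈ D ∧ S ψ = ψ}) ∧
    (∀ (r : ℝ), ∀ x ∈ {ψ : H | ψ ∈ D ∧ S ψ = ψ},
        r • x ∈ {ψ : H | ψ ∈ D ∧ S ψ = ψ}) ∧
    IsClosed {ψ : H | ψ ∈ D ∧ S ψ = ψ} ∧
    {ψ : H | ψ ∈ D ∧ S ψ = ψ} ∩ (Complex.I • {ψ : H | ψ ∈ D ∧ S ψ = ψ}) = {0} ∧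
    {ψ : H | ψ ∈ D ∧ S ψ = ψ} + Complex.I • {ψ : H | ψ ∈ D ∧ S ψ = ψ} = (D : Set H) ∧
    (∀ k ∈ {ψ : H | ψ ∈ D ∧ S ψ = ψ}, ∀ k' ∈ {ψ : H | ψ ∈ D ∧ S ψ = ψ},
        S (k + Complex.I • k') = k - Complex.I • k') := by
  have hS0 : S 0 = 0 := by
    have h := hadd 0 D.zero_mem 0 D.zero_mem
    rw [add_zero] at h
    exact (left_eq_add.mp h)
  -- S of I • k' for k' fixed
  have hSI : ∀ ψ ∈ D, S (Complex.I • ψ) = -(Complex.I • S ψ) := by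
    intro ψ hψ
    rw [hconj Complex.I ψ hψ, Complex.conj_I, neg_smul]
  refine ⟨⟨D.zero_mem, hS0⟩, ?_, ?_, ?_, ?_, ?_, ?_⟩
  · rintro x ⟨hxD, hxS⟩ y ⟨hyD, hyS⟩
    exact ⟨D.add_mem hxD hyD, by rw [hadd x hxD y hyD, hxS, hyS]⟩
  · rintro r x ⟨hxD, hxS⟩
    refine ⟨D.smul_mem (r : ℂ) hxD, ?_⟩
    have := hconj (r : ℂ) x hxD
    rw [Complex.conj_ofReal, hxS] at this
    exact this
  · apply IsSeqClosed.isClosed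
    intro ψseq ψ hmem htend
    have h2 : Tendsto (fun n => S (ψseq n)) atTop (nhds ψ) :=
      htend.congr (fun n => (hmem n).2.symm)
    exact hclosedGraph ψseq ψ ψ (fun n => (hmem n).1) htend h2
  · ext x
    simp only [Set.mem_inter_iff, Set.mem_smul_set, Set.mem_setOf_eq, Set.mem_singleton_iff]
    constructor
    · rintro ⟨⟨hxD, hxS⟩, k, ⟨hkD, hkS⟩, rfl⟩
      have h1 : S (Complex.I • k) = -(Complex.I • k) := by
        rw [hSI k hkD, hkS]
      rw [hxS] at h1
      have h2 : (2 : ℂ) • (Complex.I • k) = 0 := by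
        rw [two_smul]; nth_rewrite 2 [h1]; exact add_neg_cancel _
      exact (smul_eq_zero.mp h2).resolve_left two_ne_zero
    · rintro rfl
      exact ⟨⟨D.zero_mem, hS0⟩, 0, ⟨D.zero_mem, hS0⟩, by simp⟩
  · ext ψ
    simp only [Set.mem_add, Set.mem_smul_set, Set.mem_setOf_eq, SetLike.mem_coe]
    constructor
    · rintro ⟨a, ⟨haD, -⟩, b, ⟨c, ⟨hcD, -⟩, rfl⟩, rfl⟩
      exact D.add_mem haD (D.smul_mem _ hcD)
    · intro hψ
      have hSψ := hmap ψ hψ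
      refine ⟨(2 : ℂ)⁻¹ • (ψ + S ψ), ⟨D.smul_mem _ (D.add_mem hψ hSψ), ?_⟩,
        Complex.I • ((2 : ℂ)⁻¹ • (Complex.I • (S ψ - ψ))),
        ⟨(2 : ℂ)⁻¹ • (Complex.I • (S ψ - ψ)),
          ⟨D.smul_mem _ (D.smul_mem _ (D.sub_mem hSψ hψ)), ?_⟩, rfl⟩, ?_⟩
      · rw [hconj _ _ (D.add_mem hψ hSψ), hadd ψ hψ (S ψ) hSψ, hinv ψ hψ]
        rw [map_inv₀, map_ofNat]
        rw [add_comm]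
      · have hsubD : S ψ - ψ ∈ D := D.sub_mem hSψ hψ
        rw [hconj _ _ (D.smul_mem _ hsubD), hSI _ hsubD]
        have hSsub : S (S ψ - ψ) = ψ - S ψ := by
          have := hadd (S ψ - ψ) hsubD ψ hψ
          rw [sub_add_cancel] at this
          have h2 : S (S ψ - ψ) = S (S ψ) - S ψ := by
            rw [eq_sub_iff_add_eq, ← this, hinv ψ hψ]
          rw [h2, hinv ψ hψ]
        rw [hSsub]
        rw [map_inv₀, map_ofNat]
        module
      · rw [smul_comm Complex.I ((2:ℂ)⁻¹), smul_smul, smul_smul, mul_assoc, Complex.I_mul_I,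
          mul_neg_one, neg_smul, smul_sub, smul_add]
        match_scalars <;> norm_num
  · rintro k ⟨hkD, hkS⟩ k' ⟨hk'D, hk'S⟩
    rw [hadd k hkD _ (D.smul_mem _ hk'D), hSI k' hk'D, hkS, hk'S, sub_eq_add_neg]
end

section
/- Let H be a complex Hilbert space and K ⊆ H a real subspace. Then K + iK is dense in H if and only if K′ ∩ iK′ = {0}, where K′ is the symplectic complement of K. -/
open scoped Pointwise

/-- The symplectic complement `K′ = {ψ ∈ H : Im⟪ψ, k⟫ = 0 for all k ∈ K}` of a real
subspace `K` of a complex Hilbert space (inner product conjugate-linear in the first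
argument). -/
def symplCompl {H : Type*} [NormedAddCommGroup H] [InnerProductSpace ℂ H]
    (K : Set H) : Set H :=
  {ψ : H | ∀ k ∈ K, (inner ℂ ψ k : ℂ).im = 0}

/-!
`K′ ∩ iK′` consists of the vectors `ψ` with `Im⟪ψ, k⟫ = Re⟪ψ, k⟫ = 0` for all `k ∈ K`, i.e. it is
the orthogonal complement of `K`, or equivalently of the complex span of `K`. That span is
`K + iK`, since `1, i` span `ℂ` over `ℝ`. In a Hilbert space a complex subspace is dense iff its
orthogonal complement is trivial.
-/

open Submodule

theorem Complex.span_one_I : span ℝ ({1, Complex.I} : Set ℂ) = ⊤ := by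
  rw [← Complex.basisOneI.span_eq, Complex.coe_basisOneI, Matrix.range_cons, Matrix.range_cons,
    Matrix.range_empty, Set.union_empty, Set.singleton_union]

theorem Submodule.coe_span_complex_eq_add_I_smul {H : Type*} [AddCommGroup H] [Module ℂ H]
    (K : Submodule ℝ H) : (span ℂ (K : Set H) : Set H) = K + Complex.I • K := by
  rw [← coe_restrictScalars ℝ, ← span_smul_of_span_eq_top Complex.span_one_I, Set.insert_eq,
    Set.union_smul, Set.singleton_smul, Set.singleton_smul, one_smul, span_union, span_eq,
    ← coe_pointwise_smul, span_eq, coe_sup]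

theorem Submodule.mem_orthogonal_span_iff {𝕜 E : Type*} [RCLike 𝕜] [NormedAddCommGroup E]
    [InnerProductSpace 𝕜 E] {s : Set E} {v : E} :
    v ∈ (span 𝕜 s)ᗮ ↔ ∀ u ∈ s, inner 𝕜 u v = 0 := by
  rw [← span_singleton_le_iff_mem, ← isOrtho_iff_le, isOrtho_comm, isOrtho_span]
  simp

section symplCompl

variable {H : Type*} [NormedAddCommGroup H] [InnerProductSpace ℂ H] {K : Set H} {ψ : H}

theorem mem_I_smul_symplCompl_iff :
    ψ ∈ Complex.I • symplCompl K ↔ ∀ k ∈ K, (inner ℂ ψ k).re = 0 := by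
  simp [Set.mem_smul_set_iff_inv_smul_mem₀ Complex.I_ne_zero, symplCompl, inner_smul_left]

theorem mem_symplCompl_inter_I_smul_iff :
    ψ ∈ symplCompl K ∩ Complex.I • symplCompl K ↔ ∀ k ∈ K, inner ℂ ψ k = 0 := by
  rw [Set.mem_inter_iff, mem_I_smul_symplCompl_iff, symplCompl, Set.mem_ofPred_eq, and_comm,
    ← forall₂_and]
  exact forall₂_congr fun k _ => (Complex.ext_iff (w := 0)).symm

theorem symplCompl_inter_I_smul_eq_orthogonal (K : Set H) :
    symplCompl K ∩ Complex.I • symplCompl K = ((span ℂ K)ᗮ : Set H) := by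
  ext ψ
  rw [mem_symplCompl_inter_I_smul_iff, SetLike.mem_coe, mem_orthogonal_span_iff]
  exact forall₂_congr fun k _ => inner_eq_zero_symm

end symplCompl

/-- For a real subspace `K ⊆ H` of a complex Hilbert space,
`K + iK` is dense in `H` if and only if `K′ ∩ iK′ = {0}`. -/
theorem dense_sum_iff_symplCompl_inter_trivial
    {H : Type*} [NormedAddCommGroup H] [InnerProductSpace ℂ H] [CompleteSpace H]
    (K : Set H)
    (h0 : (0 : H) ∈ K)
    (hadd : ∀ x ∈ K, ∀ y ∈ K, x + y ∈ K)
    (hsmul : ∀ (r : ℝ), ∀ x ∈ K, r • x ∈ K) :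
    Dense (K + Complex.I • K : Set H) ↔
      symplCompl K ∩ (Complex.I • symplCompl K) = {0} := by
  let KR : Submodule ℝ H :=
    { carrier := K, add_mem' := fun ha hb => hadd _ ha _ hb, zero_mem' := h0, smul_mem' := hsmul }
  have hspan : (K + Complex.I • K : Set H) = span ℂ K := KR.coe_span_complex_eq_add_I_smul.symm
  rw [hspan, dense_iff_topologicalClosure_eq_top, topologicalClosure_eq_top_iff,
    symplCompl_inter_I_smul_eq_orthogonal, ← bot_coe (R := ℂ), SetLike.coe_set_eq]
end

section
/- Let H be a complex Hilbert space and K ⊆ H a closed real subspace. Then K ∩ iK = {0} if and only if K′ + iK′ is dense in H, where K′ is the symplectic complement of K. -/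
/-!
Regard `H` as a real Hilbert space with inner product `Re⟪·, ·⟫`. Since `Im⟪ψ, k⟫ = Re⟪k, iψ⟫`
and `K⊥ = -K⊥`, the symplectic complement is `K′ = i • K⊥`. Multiplication by `i` is a real
isometry, so `(i • M)⊥ = i • M⊥`, and `i • i • M = M`. Hence `K′ + iK′ = i • K⊥ + K⊥`, whose
orthogonal complement is `i • K⊥⊥ ∩ K⊥⊥ = iK ∩ K` for closed `K`; a real subspace is dense
exactly when its orthogonal complement is `{0}`.
-/

open scoped Pointwise

open scoped ComplexConjugate

theorem Submodule.mem_pointwise_smul_iff_inv_smul_mem₀ {α R M : Type*} [GroupWithZero α]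
    [Semiring R] [AddCommMonoid M] [Module R M] [DistribMulAction α M] [SMulCommClass α R M]
    {a : α} (ha : a ≠ 0) (p : Submodule R M) (x : M) :
    x ∈ a • p ↔ a⁻¹ • x ∈ p := by
  rw [← SetLike.mem_coe, Submodule.coe_pointwise_smul, Set.mem_smul_set_iff_inv_smul_mem₀ ha]
  rfl

section RealInnerProduct

variable {H : Type*} [NormedAddCommGroup H] [InnerProductSpace ℂ H]

attribute [local instance] InnerProductSpace.complexToReal

theorem real_inner_complex_smul_left (z : ℂ) (x y : H) :
    inner ℝ (z • x) y = (conj z * inner ℂ x y).re := by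
  rw [real_inner_eq_re_inner ℂ, inner_smul_left]
  rfl

theorem real_inner_complex_smul_right (z : ℂ) (x y : H) :
    inner ℝ x (z • y) = (z * inner ℂ x y).re := by
  rw [real_inner_eq_re_inner ℂ, inner_smul_right]
  rfl

theorem real_inner_smul_left_eq_inv_smul_right_of_norm_eq_one {z : ℂ} (hz : ‖z‖ = 1)
    (x y : H) : inner ℝ (z • x) y = inner ℝ x (z⁻¹ • y) := by
  rw [real_inner_complex_smul_left, real_inner_complex_smul_right, Complex.inv_def,
    Complex.normSq_eq_norm_sq, hz]
  simp

theorem Submodule.orthogonal_smul_of_norm_eq_one {z : ℂ} (hz : ‖z‖ = 1) (p : Submodule ℝ H) :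
    (z • p)ᗮ = z • pᗮ := by
  have hz0 : z ≠ 0 := norm_ne_zero_iff.mp (hz ▸ one_ne_zero)
  ext x
  simp only [Submodule.mem_orthogonal, Submodule.mem_pointwise_smul_iff_inv_smul_mem₀ hz0]
  constructor
  · intro h u hu
    rw [← real_inner_smul_left_eq_inv_smul_right_of_norm_eq_one hz]
    exact h (z • u) (by rwa [inv_smul_smul₀ hz0])
  · intro h u hu
    rw [← smul_inv_smul₀ hz0 u, real_inner_smul_left_eq_inv_smul_right_of_norm_eq_one hz]
    exact h _ hu

theorem Submodule.I_smul_I_smul (p : Submodule ℝ H) : Complex.I • Complex.I • p = p := by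
  ext x
  simp [Submodule.mem_pointwise_smul_iff_inv_smul_mem₀, smul_smul]

theorem symplCompl_eq_I_smul_orthogonal (p : Submodule ℝ H) :
    symplCompl (p : Set H) = (Complex.I • pᗮ : Submodule ℝ H) := by
  ext ψ
  simp only [symplCompl, Set.mem_ofPred_eq, SetLike.mem_coe, Submodule.mem_orthogonal,
    Submodule.mem_pointwise_smul_iff_inv_smul_mem₀ Complex.I_ne_zero,
    real_inner_complex_smul_right]
  refine forall₂_congr fun k _ => ?_
  rw [Complex.inv_I, neg_mul, Complex.neg_re, Complex.I_mul_re, neg_neg,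
    show (inner ℂ ψ k).im = -(inner ℂ k ψ).im from inner_im_symm (𝕜 := ℂ) ψ k, neg_eq_zero]

theorem Submodule.inf_I_smul_eq_bot_iff_dense_symplCompl [CompleteSpace H] (p : Submodule ℝ H)
    (hp : IsClosed (p : Set H)) :
    p ⊓ Complex.I • p = ⊥ ↔
      Dense (symplCompl (p : Set H) + Complex.I • symplCompl (p : Set H)) := by
  have hsum : symplCompl (p : Set H) + Complex.I • symplCompl (p : Set H) =
      ((Complex.I • pᗮ ⊔ pᗮ : Submodule ℝ H) : Set H) := by
    rw [symplCompl_eq_I_smul_orthogonal, ← Submodule.coe_pointwise_smul,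
      Submodule.I_smul_I_smul, Submodule.coe_sup]
  have horth : (Complex.I • pᗮ ⊔ pᗮ)ᗮ = Complex.I • p ⊓ p := by
    rw [← Submodule.inf_orthogonal, Submodule.orthogonal_smul_of_norm_eq_one (by simp),
      Submodule.orthogonal_orthogonal_eq_closure, hp.submodule_topologicalClosure_eq]
  rw [hsum, Submodule.dense_iff_topologicalClosure_eq_top,
    Submodule.topologicalClosure_eq_top_iff, horth, inf_comm]

end RealInnerProduct

/-- For a closed real subspace `K ⊆ H` of a complex Hilbert space,
`K ∩ iK = {0}` if and only if `K′ + iK′` is dense in `H`. -/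
theorem inter_trivial_iff_dense_sum_symplCompl
    {H : Type*} [NormedAddCommGroup H] [InnerProductSpace ℂ H] [CompleteSpace H]
    (K : Set H)
    (h0 : (0 : H) ∈ K)
    (hadd : ∀ x ∈ K, ∀ y ∈ K, x + y ∈ K)
    (hsmul : ∀ (r : ℝ), ∀ x ∈ K, r • x ∈ K)
    (hclosed : IsClosed K) :
    K ∩ (Complex.I • K) = {0} ↔
      Dense (symplCompl K + Complex.I • symplCompl K : Set H) := by
  obtain ⟨p, rfl⟩ : ∃ p : Submodule ℝ H, (p : Set H) = K :=
    ⟨⟨⟨⟨K, fun {x y} hx hy => hadd x hx y hy⟩, h0⟩, hsmul⟩, rfl⟩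
  rw [← Submodule.inf_I_smul_eq_bot_iff_dense_symplCompl p hclosed,
    ← Submodule.coe_pointwise_smul Complex.I p, ← Submodule.coe_inf,
    ← Submodule.bot_coe (R := ℝ), SetLike.coe_set_eq]
end

section
/- In Minkowski space ℝ⁴, the causal completion of the upper lightfront boundary of the right wedge, LFB := {x ∈ ℝ⁴ : x⁰ = x¹ and x⁰ ≥ 0}, is the closed right wedge: LFB″ = {x ∈ ℝ⁴ : x¹ ≥ |x⁰|}. (Moreover the intermediate causal complement is the open left wedge: LFB′ = {x : x¹ < −|x⁰|}.) -/
/-- The Minkowski quadratic form `Q(x) = (x⁰)² - (x¹)² - (x²)² - (x³)²` on `ℝ⁴`. -/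
def minkowskiQ (x : Fin 4 → ℝ) : ℝ :=
  x 0 ^ 2 - x 1 ^ 2 - x 2 ^ 2 - x 3 ^ 2

/-- The causal complement `O′ = {y : Q(y - x) < 0 for all x ∈ O}` of a subset of
Minkowski space. -/
def causalCompl (O : Set (Fin 4 → ℝ)) : Set (Fin 4 → ℝ) :=
  {y | ∀ x ∈ O, minkowskiQ (y - x) < 0}

/-- The upper lightfront boundary `LFB = {x : x⁰ = x¹ ∧ x⁰ ≥ 0}` of the right wedge. -/
def lightfrontBoundary : Set (Fin 4 → ℝ) :=
  {x | x 0 = x 1 ∧ 0 ≤ x 0}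

lemma compl_LFB : causalCompl lightfrontBoundary = {x : Fin 4 → ℝ | x 1 < -|x 0|} := by
  ext y
  constructor
  · intro h
    have h0 : minkowskiQ (y - ![0, 0, y 2, y 3]) < 0 := by
      apply h
      constructor <;> simp
    simp [minkowskiQ] at h0
    have hneg : y 1 < 0 := by
      by_contra hc
      push_neg at hc
      have h1 : minkowskiQ (y - ![y 1, y 1, y 2, y 3]) < 0 := by
        apply h
        exact ⟨rfl, hc⟩
      simp [minkowskiQ] at h1
      nlinarith [sq_nonneg (y 0 - y 1)]
    show y 1 < -|y 0|
    rcases abs_cases (y 0) with ⟨he, _⟩ | ⟨he, _⟩ <;> rw [he] <;> nlinarith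
  · intro h x hx
    obtain ⟨hx01, hx0⟩ := hx
    have h' : y 1 < -|y 0| := h
    simp only [minkowskiQ, Pi.sub_apply]
    have key : y 1 - x 1 < -|y 0 - x 0| := by
      have : |y 0 - x 0| ≤ |y 0| + x 0 := by
        calc |y 0 - x 0| ≤ |y 0| + |x 0| := abs_sub _ _
        _ = |y 0| + x 0 := by rw [abs_of_nonneg hx0]
      linarith [hx01 ▸ this]
    have h2 : (y 0 - x 0)^2 < (y 1 - x 1)^2 := by
      nlinarith [abs_nonneg (y 0 - x 0), sq_abs (y 0 - x 0)]
    nlinarith [sq_nonneg (y 2 - x 2), sq_nonneg (y 3 - x 3)]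

/-- The causal completion of the upper lightfront boundary of the
right wedge is the closed right wedge, `LFB″ = {x : x¹ ≥ |x⁰|}`; moreover the
intermediate causal complement is the open left wedge `LFB′ = {x : x¹ < -|x⁰|}`. -/
theorem causal_completion_lightfrontBoundary :
    causalCompl (causalCompl lightfrontBoundary) = {x : Fin 4 → ℝ | |x 0| ≤ x 1} ∧
    causalCompl lightfrontBoundary = {x : Fin 4 → ℝ | x 1 < -|x 0|} := by
  refine ⟨?_, compl_LFB⟩
  rw [compl_LFB]
  ext y
  constructor
  · intro h
    show |y 0| ≤ y 1
    by_contra hc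
    push_neg at hc
    have hz : (![0, y 1 - |y 0|, y 2, y 3] : Fin 4 → ℝ) ∈ {x : Fin 4 → ℝ | x 1 < -|x 0|} := by
      show y 1 - |y 0| < -|(0:ℝ)|
      rw [abs_zero]
      linarith [abs_nonneg (y 0)]
    have := h _ hz
    simp [minkowskiQ] at this
  · intro h z hz
    have h' : |y 0| ≤ y 1 := h
    have hz' : z 1 < -|z 0| := hz
    simp only [minkowskiQ, Pi.sub_apply]
    have key : |y 0 - z 0| < y 1 - z 1 := by
      calc |y 0 - z 0| ≤ |y 0| + |z 0| := abs_sub _ _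
      _ < y 1 - z 1 := by linarith
    have h2 : (y 0 - z 0)^2 < (y 1 - z 1)^2 := by
      nlinarith [abs_nonneg (y 0 - z 0), sq_abs (y 0 - z 0)]
    nlinarith [sq_nonneg (y 2 - z 2), sq_nonneg (y 3 - z 3)]
end
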